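/- For n ≥ 1, the signed count over all overpartitions π of n, weighted by (-1)^{ℓ_{O≤N}(π)}, equals 2·D_e(n), twice the number of partitions of n into distinct parts with an even number of parts. Here ℓ_{O≤N}(π) is the number of overlined parts of π of size less than or equal to the largest non-overlined part (counting all overlined parts if there is no non-overlined part). -/

import Mathlib

open scoped Classical

/-- An overpartition of `n`: a finite set of overlined part sizes (the first
occurrence of a size may be overlined, so overlined parts are distinct)
together with a multiset of non-overlined parts, all parts positive,
with total sum `n`. -/
structure Overpartition (n : ℕ) where
  over' : Finset ℕ
  plain : Multiset ℕ
  over_pos : ∀ x ∈ over', 0 < x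
  plain_pos : ∀ x ∈ plain, 0 < x
  sum_eq : (∑ x ∈ over', x) + plain.sum = n
/-- Number of overlined parts of size at most the largest non-overlined part;
all overlined parts count if there is no non-overlined part. -/
noncomputable def lOleN {n : ℕ} (π : Overpartition n) : ℕ :=
  if π.plain = 0 then π.over'.card
  else (π.over'.filter (fun x => ∃ y ∈ π.plain, x ≤ y)).card

/-! Let `m` be the smallest part of an overpartition `π`, and toggle the overline on one copy of
`m`. This keeps the underlying partition, hence `m`, and since `m` is at most every non-overlined
part it changes ℓ_{O≤N} by exactly one, provided non-overlined parts exist before and after.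
The toggle therefore pairs off with opposite signs all overpartitions having a non-overlined part,
except those whose only non-overlined part is smaller than every overlined part (weight `+1`);
these it exchanges with the overpartitions without non-overlined parts, i.e. with the partitions
into distinct parts, weighted by the parity of their number of parts. So the signed count is
`D_e(n) - D_o(n) + (D_e(n) + D_o(n)) = 2 D_e(n)`. -/

open Finset

theorem Multiset.exists_ge_mem_cons_iff {α : Type*} [Preorder α] {s : Multiset α} {a x : α}
    (ha : ∃ y ∈ s, a ≤ y) : (∃ y ∈ a ::ₘ s, x ≤ y) ↔ ∃ y ∈ s, x ≤ y := by
  refine ⟨?_, fun ⟨y, hy, hxy⟩ => ⟨y, Multiset.mem_cons_of_mem hy, hxy⟩⟩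
  rintro ⟨y, hy, hxy⟩
  rcases Multiset.mem_cons.1 hy with rfl | hy
  · obtain ⟨z, hz, hyz⟩ := ha
    exact ⟨z, hz, hxy.trans hyz⟩
  · exact ⟨y, hy, hxy⟩

namespace Overpartition

variable {n : ℕ}

lemma ext {π σ : Overpartition n} (hover : π.over' = σ.over') (hplain : π.plain = σ.plain) :
    π = σ := by
  cases π; cases σ; congr

def parts (π : Overpartition n) : Multiset ℕ := π.over'.val + π.plain

lemma sum_parts (π : Overpartition n) : π.parts.sum = n := by
  have h := π.sum_eq
  rwa [sum_eq_multiset_sum, Multiset.map_id', ← Multiset.sum_add] at h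

lemma pos_of_mem_parts {π : Overpartition n} {x : ℕ} (hx : x ∈ π.parts) : 0 < x :=
  (Multiset.mem_add.1 hx).elim (π.over_pos x) (π.plain_pos x)

lemma parts_ne_zero (hn : n ≠ 0) (π : Overpartition n) : π.parts ≠ 0 := fun h =>
  hn (by rw [← π.sum_parts, h, Multiset.sum_zero])

lemma parts_ne_zero_of_plain_ne_zero {π : Overpartition n} (h : π.plain ≠ 0) : π.parts ≠ 0 :=
  fun h0 => h (add_eq_zero.1 h0).2

def toPartition (π : Overpartition n) : n.Partition :=
  ⟨π.parts, pos_of_mem_parts, π.sum_parts⟩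

instance : Finite (Overpartition n) := by
  have hover : ∀ π : Overpartition n, π.over' ∈ (range (n + 1)).powerset := fun π =>
    mem_powerset.2 fun x hx => mem_range.2 <| Nat.lt_succ_of_le <|
      (single_le_sum (fun _ _ => Nat.zero_le _) hx).trans (π.sum_eq ▸ Nat.le_add_right _ _)
  refine Finite.of_injective
    (fun π => (π.toPartition, (⟨π.over', hover π⟩ : (range (n + 1)).powerset))) ?_
  intro π σ h
  simp only [Prod.mk.injEq, Subtype.mk.injEq] at h
  have hparts : π.over'.val + π.plain = σ.over'.val + σ.plain :=
    congrArg Nat.Partition.parts h.1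
  rw [h.2] at hparts
  exact ext h.2 (add_left_cancel hparts)

noncomputable instance : Fintype (Overpartition n) := Fintype.ofFinite _

def ofNodup (p : n.Partition) (hp : p.parts.Nodup) : Overpartition n where
  over' := ⟨p.parts, hp⟩
  plain := 0
  over_pos _ hx := p.parts_pos hx
  plain_pos _ hx := absurd hx (Multiset.notMem_zero _)
  sum_eq := by rw [sum_mk, Multiset.map_id', Multiset.sum_zero, add_zero, p.parts_sum]

def regroup (π : Overpartition n) (o : Finset ℕ) (p : Multiset ℕ) (h : o.val + p = π.parts) :
    Overpartition n where
  over' := o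
  plain := p
  over_pos _ hx := pos_of_mem_parts (h ▸ Multiset.mem_add.2 (Or.inl hx))
  plain_pos _ hx := pos_of_mem_parts (h ▸ Multiset.mem_add.2 (Or.inr hx))
  sum_eq := by
    rw [sum_eq_multiset_sum, Multiset.map_id', ← Multiset.sum_add, h, π.sum_parts]

lemma parts_regroup (π : Overpartition n) {o : Finset ℕ} {p : Multiset ℕ}
    (h : o.val + p = π.parts) : (π.regroup o p h).parts = π.parts := h

noncomputable def smallest (π : Overpartition n) : ℕ := sInf {x | x ∈ π.parts}

lemma smallest_mem {π : Overpartition n} (h : π.parts ≠ 0) : π.smallest ∈ π.parts :=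
  Nat.sInf_mem (Multiset.exists_mem_of_ne_zero h)

lemma smallest_le {π : Overpartition n} {x : ℕ} (hx : x ∈ π.parts) : π.smallest ≤ x :=
  Nat.sInf_le hx

noncomputable def toggle (π : Overpartition n) : Overpartition n :=
  if h : π.smallest ∈ π.over' then
    π.regroup (π.over'.erase π.smallest) (π.smallest ::ₘ π.plain) <| by
      rw [Multiset.add_cons, ← Multiset.cons_add, erase_val, Multiset.cons_erase h]; rfl
  else if h' : π.smallest ∈ π.plain then
    π.regroup (insert π.smallest π.over') (π.plain.erase π.smallest) <| by
      rw [insert_val_of_notMem h, Multiset.cons_add, ← Multiset.add_cons,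
        Multiset.cons_erase h']; rfl
  else π

lemma over'_toggle_of_mem {π : Overpartition n} (h : π.smallest ∈ π.over') :
    π.toggle.over' = π.over'.erase π.smallest := by
  rw [toggle, dif_pos h]; rfl

lemma plain_toggle_of_mem {π : Overpartition n} (h : π.smallest ∈ π.over') :
    π.toggle.plain = π.smallest ::ₘ π.plain := by
  rw [toggle, dif_pos h]; rfl

lemma over'_toggle_of_notMem {π : Overpartition n} (h : π.smallest ∉ π.over')
    (h' : π.smallest ∈ π.plain) :
    π.toggle.over' = insert π.smallest π.over' := by
  rw [toggle, dif_neg h, dif_pos h']; rfl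

lemma plain_toggle_of_notMem {π : Overpartition n} (h : π.smallest ∉ π.over')
    (h' : π.smallest ∈ π.plain) :
    π.toggle.plain = π.plain.erase π.smallest := by
  rw [toggle, dif_neg h, dif_pos h']; rfl

lemma parts_toggle (π : Overpartition n) : π.toggle.parts = π.parts := by
  unfold toggle
  split_ifs <;> simp only [parts_regroup]

lemma smallest_toggle (π : Overpartition n) : π.toggle.smallest = π.smallest := by
  rw [smallest, smallest, parts_toggle]

lemma toggle_toggle (π : Overpartition n) : π.toggle.toggle = π := by
  by_cases h : π.smallest ∈ π.over'
  · have h₁ : π.toggle.smallest ∉ π.toggle.over' := by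
      rw [smallest_toggle, over'_toggle_of_mem h]; exact notMem_erase _ _
    have h₂ : π.toggle.smallest ∈ π.toggle.plain := by
      rw [smallest_toggle, plain_toggle_of_mem h]; exact Multiset.mem_cons_self _ _
    refine ext ?_ ?_
    · rw [over'_toggle_of_notMem h₁ h₂, smallest_toggle, over'_toggle_of_mem h, insert_erase h]
    · rw [plain_toggle_of_notMem h₁ h₂, smallest_toggle, plain_toggle_of_mem h,
        Multiset.erase_cons_head]
  by_cases h' : π.smallest ∈ π.plain
  · have h₁ : π.toggle.smallest ∈ π.toggle.over' := by
      rw [smallest_toggle, over'_toggle_of_notMem h h']; exact mem_insert_self _ _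
    refine ext ?_ ?_
    · rw [over'_toggle_of_mem h₁, smallest_toggle, over'_toggle_of_notMem h h', erase_insert h]
    · rw [plain_toggle_of_mem h₁, smallest_toggle, plain_toggle_of_notMem h h',
        Multiset.cons_erase h']
  · have hπ : π.toggle = π := by rw [toggle, dif_neg h, dif_neg h']
    rw [hπ, hπ]

lemma lOleN_of_plain_ne_zero {π : Overpartition n} (h : π.plain ≠ 0) :
    lOleN π = #(π.over'.filter fun x => ∃ y ∈ π.plain, x ≤ y) :=
  if_neg h

lemma lOleN_of_plain_eq_zero {π : Overpartition n} (h : π.plain = 0) : lOleN π = #π.over' :=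
  if_pos h

lemma toggle_of_plain_eq_zero {π : Overpartition n} (hn : n ≠ 0) (h : π.plain = 0) :
    π.toggle.plain ≠ 0 ∧ lOleN π.toggle = 0 := by
  have hm : π.smallest ∈ π.over' := by
    simpa [parts, h] using smallest_mem (π.parts_ne_zero hn)
  have hplain : π.toggle.plain ≠ 0 := by
    rw [plain_toggle_of_mem hm]; exact Multiset.cons_ne_zero
  refine ⟨hplain, ?_⟩
  rw [lOleN_of_plain_ne_zero hplain, card_eq_zero, filter_eq_empty_iff, over'_toggle_of_mem hm,
    plain_toggle_of_mem hm, h]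
  rintro x hx ⟨y, hy, hxy⟩
  rw [Multiset.mem_singleton.1 hy] at hxy
  have hsx : π.smallest ≤ x := smallest_le (Multiset.mem_add.2 (Or.inl (mem_of_mem_erase hx)))
  exact ne_of_mem_erase hx (le_antisymm hxy hsx)

lemma even_lOleN_toggle_iff {π : Overpartition n} (h : π.plain ≠ 0)
    (ht : π.toggle.plain ≠ 0) :
    Even (lOleN π.toggle) ↔ ¬ Even (lOleN π) := by
  rw [lOleN_of_plain_ne_zero h, lOleN_of_plain_ne_zero ht]
  have hm := smallest_mem (parts_ne_zero_of_plain_ne_zero h)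
  by_cases ho : π.smallest ∈ π.over'
  · obtain ⟨y, hy⟩ := Multiset.exists_mem_of_ne_zero h
    have hmy : π.smallest ≤ y := smallest_le (Multiset.mem_add.2 (Or.inr hy))
    have hmem : π.smallest ∈ π.over'.filter fun x => ∃ y ∈ π.plain, x ≤ y :=
      mem_filter.2 ⟨ho, y, hy, hmy⟩
    simp_rw [over'_toggle_of_mem ho, plain_toggle_of_mem ho,
      Multiset.exists_ge_mem_cons_iff ⟨y, hy, hmy⟩, filter_erase, card_erase_of_mem hmem]
    obtain ⟨k, hk⟩ := Nat.exists_eq_add_one_of_ne_zero (card_ne_zero_of_mem hmem)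
    rw [hk, Nat.add_sub_cancel, Nat.even_add_one, not_not]
  · have hp : π.smallest ∈ π.plain := (Multiset.mem_add.1 hm).resolve_left ho
    rw [plain_toggle_of_notMem ho hp] at ht
    obtain ⟨z, hz⟩ := Multiset.exists_mem_of_ne_zero ht
    have hmz : π.smallest ≤ z :=
      smallest_le (Multiset.mem_add.2 (Or.inr (Multiset.mem_of_mem_erase hz)))
    have hpred (x : ℕ) :
        (∃ y ∈ π.plain, x ≤ y) ↔ ∃ y ∈ π.plain.erase π.smallest, x ≤ y := by
      conv_lhs => rw [← Multiset.cons_erase hp]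
      exact Multiset.exists_ge_mem_cons_iff ⟨z, hz, hmz⟩
    simp_rw [over'_toggle_of_notMem ho hp, plain_toggle_of_notMem ho hp, hpred]
    rw [filter_insert, if_pos ⟨z, hz, hmz⟩,
      card_insert_of_notMem fun hmem => ho (mem_filter.1 hmem).1, Nat.even_add_one]

theorem card_plain_ne_zero_even_eq_card_plain_eq_zero_or_odd (hn : n ≠ 0) :
    #{π : Overpartition n | π.plain ≠ 0 ∧ Even (lOleN π)} =
      #{π : Overpartition n | π.plain = 0 ∨ Odd (lOleN π)} := by
  refine card_nbij' toggle toggle ?_ ?_ (fun π _ => toggle_toggle π)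
    (fun π _ => toggle_toggle π)
  · intro π hπ
    rw [mem_coe, mem_filter] at hπ ⊢
    refine ⟨mem_univ _, ?_⟩
    by_cases ht : π.toggle.plain = 0
    · exact Or.inl ht
    · exact Or.inr <| Nat.not_even_iff_odd.1 fun he =>
        (even_lOleN_toggle_iff hπ.2.1 ht).1 he hπ.2.2
  · intro π hπ
    rw [mem_coe, mem_filter] at hπ ⊢
    refine ⟨mem_univ _, ?_⟩
    by_cases h : π.plain = 0
    · obtain ⟨ht, h0⟩ := toggle_of_plain_eq_zero hn h
      exact ⟨ht, h0 ▸ Even.zero⟩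
    have hodd : Odd (lOleN π) := hπ.2.resolve_left h
    have ht : π.toggle.plain ≠ 0 := by
      intro ht
      have h0 := (toggle_of_plain_eq_zero hn ht).2
      rw [toggle_toggle] at h0
      exact Nat.not_odd_zero (h0 ▸ hodd)
    exact ⟨ht, (even_lOleN_toggle_iff h ht).2 (Nat.not_even_iff_odd.2 hodd)⟩

theorem card_plain_eq_zero_eq_card_nodup (P : ℕ → Prop) [DecidablePred P] :
    #{π : Overpartition n | π.plain = 0 ∧ P (lOleN π)} =
      #{p : n.Partition | p.parts.Nodup ∧ P (Multiset.card p.parts)} := by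
  refine card_bij' (fun π _ => π.toPartition) (fun p hp => ofNodup p (mem_filter.1 hp).2.1)
    ?_ ?_ ?_ ?_
  · intro π hπ
    obtain ⟨h0, hP⟩ := (mem_filter.1 hπ).2
    have hparts : π.toPartition.parts = π.over'.val := by
      simp [toPartition, parts, h0]
    refine mem_filter.2 ⟨mem_univ _, ?_, ?_⟩
    · rw [hparts]; exact π.over'.nodup
    · rwa [hparts, ← card_def, ← lOleN_of_plain_eq_zero h0]
  · intro p hp
    refine mem_filter.2 ⟨mem_univ _, rfl, ?_⟩
    rw [lOleN_of_plain_eq_zero rfl]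
    exact (mem_filter.1 hp).2.2
  · intro π hπ
    have h0 := (mem_filter.1 hπ).2.1
    exact ext (by ext; simp [ofNodup, toPartition, parts, h0]) h0.symm
  · intro p _
    ext
    simp [ofNodup, toPartition, parts]

end Overpartition

theorem stmt_4 (n : ℕ) (hn : 1 ≤ n) :
    (Nat.card {π : Overpartition n // Even (lOleN π)} : ℤ) -
      Nat.card {π : Overpartition n // Odd (lOleN π)} =
    2 * Nat.card {p : n.Partition //
        p.parts.Nodup ∧ Even (Multiset.card p.parts)} := by
  have hEven : #{π : Overpartition n | Even (lOleN π)} =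
      #{π : Overpartition n | π.plain = 0 ∧ Even (lOleN π)} +
        #{π : Overpartition n | π.plain ≠ 0 ∧ Even (lOleN π)} := by
    rw [← card_union_of_disjoint (disjoint_filter.2 fun π _ h₁ h₂ => h₂.1 h₁.1),
      ← filter_or]
    congr 1; ext π
    simp only [mem_filter, mem_univ, true_and]
    tauto
  have hOdd : #{π : Overpartition n | π.plain = 0 ∨ Odd (lOleN π)} =
      #{π : Overpartition n | Odd (lOleN π)} +
        #{π : Overpartition n | π.plain = 0 ∧ Even (lOleN π)} := by
    rw [← card_union_of_disjoint (disjoint_filter.2 fun π _ h₁ h₂ =>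
      Nat.not_even_iff_odd.2 h₁ h₂.2), ← filter_or]
    congr 1; ext π
    simp only [mem_filter, mem_univ, true_and, ← Nat.not_even_iff_odd]
    tauto
  rw [Overpartition.card_plain_ne_zero_even_eq_card_plain_eq_zero_or_odd (by omega)] at hEven
  rw [Overpartition.card_plain_eq_zero_eq_card_nodup Even] at hEven hOdd
  simp only [Nat.card_eq_fintype_card, Fintype.card_subtype]
  omega
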